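/- arXiv:2303.17019 — 2 statements merged into one kernel-verified Lean document; each statement's English description precedes it below -/
import Mathlib

section
/- Let E and epsilon be real constants and define f(t, p, xi) = sin( p*xi + E*t ) * exp( -epsilon * t ). Then for all t in R, all p != 0, and all xi in R, f is an exact solution of the relativistic Fokker-Planck equation with simplified collision operator: (d/dt) f - E*xi*(d/dp) f - E*((1-xi^2)/p)*(d/dxi) f = (epsilon/p^2) * (d/dp)[ p^2 * (d/dp) f ] + (epsilon/p^2) * (d/dxi)[ (1-xi^2) * (d/dxi) f ]. -/
/-!
The solution has the form `φ(pξ + Et) exp(-εt)` with `φ = sin`. The phase `pξ + Et` is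
annihilated by the transport operator `∂ₜ - Eξ ∂ₚ - E(1-ξ²)/p ∂_ξ`, so the left-hand side
reduces to the damping term `-ε φ exp(-εt)`. On a function of `pξ` the two collision terms
contribute `ε ξ² φ''` and `ε (1-ξ²) φ''` (their first-order parts `±2εξφ'/p` cancel), so the
right-hand side is `ε φ'' exp(-εt)`; the two agree because `sin'' = -sin`.
-/

open Real

section PhaseFunction

variable {φ g w : ℝ → ℝ} {a : ℝ}

theorem hasDerivAt_comp_affine_mul_const (hφ : Differentiable ℝ φ)
    (hg : ∀ y, HasDerivAt g a y) (k x : ℝ) :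
    HasDerivAt (fun y => φ (g y) * k) (deriv φ (g x) * a * k) x :=
  ((hφ (g x)).hasDerivAt.comp x (hg x)).mul_const k

theorem deriv_weight_mul_deriv_comp_affine (hφ : Differentiable ℝ φ)
    (hφ' : Differentiable ℝ (deriv φ)) (hg : ∀ y, HasDerivAt g a y) {w' : ℝ} (k x : ℝ)
    (hw : HasDerivAt w w' x) :
    deriv (fun y => w y * deriv (fun y' => φ (g y') * k) y) x
      = (w' * deriv φ (g x) * a + w x * deriv (deriv φ) (g x) * a ^ 2) * k := by
  have hfirst : deriv (fun y' => φ (g y') * k) = fun y => deriv φ (g y) * (a * k) :=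
    funext fun y => (hasDerivAt_comp_affine_mul_const hφ hg k y).deriv.trans (mul_assoc ..)
  rw [hfirst, (hw.fun_mul (hasDerivAt_comp_affine_mul_const hφ' hg (a * k) x)).deriv]
  ring

theorem deriv_phase_mul_exp_decay (hφ : Differentiable ℝ φ) (E ε p ξ t : ℝ) :
    deriv (fun s => φ (p * ξ + E * s) * exp (-ε * s)) t
      = (E * deriv φ (p * ξ + E * t) - ε * φ (p * ξ + E * t)) * exp (-ε * t) := by
  have hphase : HasDerivAt (fun s => φ (p * ξ + E * s)) (deriv φ (p * ξ + E * t) * E) t :=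
    (hφ _).hasDerivAt.comp t ((hasDerivAt_const_mul E).const_add (p * ξ))
  have hdecay : HasDerivAt (fun s => exp (-ε * s)) (exp (-ε * t) * -ε) t :=
    (hasDerivAt_const_mul (-ε)).exp
  rw [(hphase.fun_mul hdecay).deriv]
  ring

variable (E ε : ℝ) {t p ξ : ℝ}

theorem transport_phase_mul_exp_decay (hφ : Differentiable ℝ φ) (hp : p ≠ 0) :
    deriv (fun s : ℝ => φ (p * ξ + E * s) * exp (-ε * s)) t
        - E * ξ * deriv (fun q : ℝ => φ (q * ξ + E * t) * exp (-ε * t)) p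
        - E * ((1 - ξ ^ 2) / p) * deriv (fun z : ℝ => φ (p * z + E * t) * exp (-ε * t)) ξ
      = -ε * φ (p * ξ + E * t) * exp (-ε * t) := by
  rw [deriv_phase_mul_exp_decay hφ,
    (hasDerivAt_comp_affine_mul_const hφ
      (fun _ => (hasDerivAt_mul_const ξ).add_const _) _ p).deriv,
    (hasDerivAt_comp_affine_mul_const hφ
      (fun _ => (hasDerivAt_const_mul p).add_const _) _ ξ).deriv]
  field_simp
  ring

theorem collision_phase_mul_exp_decay (hφ : Differentiable ℝ φ)
    (hφ' : Differentiable ℝ (deriv φ)) (hp : p ≠ 0) :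
    (ε / p ^ 2) * deriv (fun q : ℝ => q ^ 2 *
          deriv (fun q' : ℝ => φ (q' * ξ + E * t) * exp (-ε * t)) q) p
        + (ε / p ^ 2) * deriv (fun z : ℝ => (1 - z ^ 2) *
          deriv (fun z' : ℝ => φ (p * z' + E * t) * exp (-ε * t)) z) ξ
      = ε * deriv (deriv φ) (p * ξ + E * t) * exp (-ε * t) := by
  rw [deriv_weight_mul_deriv_comp_affine hφ hφ'
      (fun _ => (hasDerivAt_mul_const ξ).add_const _) _ p (hasDerivAt_pow 2 p),
    deriv_weight_mul_deriv_comp_affine hφ hφ'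
      (fun _ => (hasDerivAt_const_mul p).add_const _) _ ξ ((hasDerivAt_pow 2 ξ).const_sub 1)]
  field_simp
  ring

end PhaseFunction

/-- The manufactured solution `f(t, p, ξ) = sin(pξ + Et) exp(-εt)` is an exact
solution of the relativistic Fokker--Planck equation with the simplified
collision operator (collision coefficients `C_F = 0`, `C_A = C_B = ε`). -/
theorem sin_exp_solution_collision (E ε : ℝ) :
    ∀ (t p ξ : ℝ), p ≠ 0 →
      deriv (fun s : ℝ => Real.sin (p * ξ + E * s) * Real.exp (-ε * s)) t
        - E * ξ *
            deriv (fun q : ℝ => Real.sin (q * ξ + E * t) * Real.exp (-ε * t)) p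
        - E * ((1 - ξ ^ 2) / p) *
            deriv (fun z : ℝ => Real.sin (p * z + E * t) * Real.exp (-ε * t)) ξ
      = (ε / p ^ 2) *
          deriv (fun q : ℝ => q ^ 2 *
            deriv (fun q' : ℝ =>
              Real.sin (q' * ξ + E * t) * Real.exp (-ε * t)) q) p
        + (ε / p ^ 2) *
          deriv (fun z : ℝ => (1 - z ^ 2) *
            deriv (fun z' : ℝ =>
              Real.sin (p * z' + E * t) * Real.exp (-ε * t)) z) ξ := by
  intro t p ξ hp
  have hsin' : Differentiable ℝ (deriv sin) := by
    rw [Real.deriv_sin]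
    exact differentiable_cos
  rw [transport_phase_mul_exp_decay E ε differentiable_sin hp,
    collision_phase_mul_exp_decay E ε differentiable_sin hsin' hp,
    Real.deriv_sin, Real.deriv_cos']
  ring
end

section
/- Let p > 0, set gamma = sqrt(1 + p^2), and let xi be in the open interval (-1, 0). Define a = ((gamma+1)/(gamma-1)) * xi^2 and, when a > 1, gamma_star = (a + 1)/(a - 1). Then the two conditions (a > 1 and gamma_star >= 2*gamma - 1) hold simultaneously if and only if p/(gamma+1) < -xi and -xi <= sqrt( gamma/(gamma+1) ). In other words, the knock-on source S_1 at (p, xi) is supported exactly in the thin region xi in [ -sqrt(gamma/(gamma+1)), -p/(gamma+1) ). -/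
/-- Support of the knock-on source `S₁` in the Chiu model: for `p > 0`,
`γ = √(1+p²)` and pitch `ξ ∈ (-1, 0)`, setting `a = ((γ+1)/(γ-1)) ξ²` and
`γ* = (a+1)/(a-1)`, the conditions `a > 1` and `γ* ≥ 2γ - 1` hold
simultaneously if and only if `p/(γ+1) < -ξ` and `-ξ ≤ √(γ/(γ+1))`. -/
theorem knock_on_support (p : ℝ) (hp : 0 < p) (ξ : ℝ)
    (hξ : ξ ∈ Set.Ioo (-1 : ℝ) 0) :
    (1 < ((Real.sqrt (1 + p ^ 2) + 1) / (Real.sqrt (1 + p ^ 2) - 1)) * ξ ^ 2 ∧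
      2 * Real.sqrt (1 + p ^ 2) - 1 ≤
        (((Real.sqrt (1 + p ^ 2) + 1) / (Real.sqrt (1 + p ^ 2) - 1)) * ξ ^ 2 + 1)
          / (((Real.sqrt (1 + p ^ 2) + 1) / (Real.sqrt (1 + p ^ 2) - 1)) * ξ ^ 2 - 1))
    ↔ (p / (Real.sqrt (1 + p ^ 2) + 1) < -ξ ∧
        -ξ ≤ Real.sqrt (Real.sqrt (1 + p ^ 2) / (Real.sqrt (1 + p ^ 2) + 1))) := by
  obtain ⟨hξ1, hξ0⟩ := hξ
  set g := Real.sqrt (1 + p ^ 2) with hgdef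
  have hg2 : g ^ 2 = 1 + p ^ 2 := Real.sq_sqrt (by positivity)
  have hgnn : 0 ≤ g := Real.sqrt_nonneg _
  have hg1 : 1 < g := by nlinarith
  have hgm : (0:ℝ) < g - 1 := by linarith
  have hgp : (0:ℝ) < g + 1 := by linarith
  have hs2 : Real.sqrt (g / (g + 1)) ^ 2 = g / (g + 1) := Real.sq_sqrt (by positivity)
  have hsnn : 0 ≤ Real.sqrt (g / (g + 1)) := Real.sqrt_nonneg _
  constructor
  · rintro ⟨h1, h2⟩
    have h1' : 1 * (g - 1) < (g + 1) * ξ ^ 2 := by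
      rwa [div_mul_eq_mul_div, lt_div_iff₀ hgm] at h1
    have hd : (0:ℝ) < (g + 1) / (g - 1) * ξ ^ 2 - 1 := by linarith
    have h2' : (2 * g - 1) * ((g + 1) / (g - 1) * ξ ^ 2 - 1) ≤
        (g + 1) / (g - 1) * ξ ^ 2 + 1 := by
      rwa [le_div_iff₀ hd] at h2
    have h2'' : (g + 1) * ξ ^ 2 ≤ g := by
      have h := mul_le_mul_of_nonneg_right h2' (le_of_lt hgm)
      have e1 : (g + 1) / (g - 1) * ξ ^ 2 * (g - 1) = (g + 1) * ξ ^ 2 := by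
        field_simp
      nlinarith [h]
    constructor
    · rw [div_lt_iff₀ hgp]
      nlinarith [mul_pos hgp (neg_pos.mpr hξ0)]
    · rw [Real.le_sqrt (by linarith : (0:ℝ) ≤ -ξ)]
      rw [le_div_iff₀ hgp]
      nlinarith
      positivity
  · rintro ⟨h1, h2⟩
    have h1' : p < -ξ * (g + 1) := by rwa [div_lt_iff₀ hgp] at h1
    have ha : g - 1 < (g + 1) * ξ ^ 2 := by nlinarith
    have h2' : ξ ^ 2 ≤ g / (g + 1) := by
      nlinarith [Real.sqrt_nonneg (g / (g + 1)), hs2]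
    have h2'' : (g + 1) * ξ ^ 2 ≤ g := by
      rw [← le_div_iff₀' hgp]; exact h2'
    have hA : 1 < (g + 1) / (g - 1) * ξ ^ 2 := by
      rw [div_mul_eq_mul_div, lt_div_iff₀ hgm]; linarith
    refine ⟨hA, ?_⟩
    rw [le_div_iff₀ (by linarith : (0:ℝ) < (g + 1) / (g - 1) * ξ ^ 2 - 1)]
    have e1 : (g + 1) / (g - 1) * ξ ^ 2 * (g - 1) = (g + 1) * ξ ^ 2 := by
      field_simp
    have key : (2 * g - 1) * ((g + 1) / (g - 1) * ξ ^ 2 - 1) * (g - 1) ≤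
        ((g + 1) / (g - 1) * ξ ^ 2 + 1) * (g - 1) := by
      nlinarith [e1]
    exact le_of_mul_le_mul_right key hgm
end
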